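/- arXiv:2109.11144 — 4 statements merged into one kernel-verified Lean document; each statement's English description precedes it below -/
import Mathlib

section
/- For a quantum channel N: CPTP(A→B), cv(N) = 1 if and only if N is a replacer channel, i.e., there exists a fixed state σ such that N(ρ) = σ for all density operators ρ. -/
open scoped BigOperators Kronecker ComplexOrder
open Matrix

noncomputable section

/-- A density operator: positive semidefinite with unit trace. -/
def IsDensity {ι : Type*} [Fintype ι] (ρ : Matrix ι ι ℂ) : Prop :=
  ρ.PosSemidef ∧ ρ.trace = 1

/-- A separable bipartite positive operator: a nonnegative combination of
tensor products of positive operators. -/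
def IsSep {ιA ιB : Type*} [Fintype ιA] [Fintype ιB]
    (Ω : Matrix (ιA × ιB) (ιA × ιB) ℂ) : Prop :=
  ∃ (n : ℕ) (a : Fin n → Matrix ιA ιA ℂ) (b : Fin n → Matrix ιB ιB ℂ),
    (∀ i, (a i).PosSemidef) ∧ (∀ i, (b i).PosSemidef) ∧
      Ω = ∑ i, a i ⊗ₖ b i

/-- Partial trace over the first (A) system. -/
def ptraceA {ιA ιB : Type*} [Fintype ιA]
    (Ω : Matrix (ιA × ιB) (ιA × ιB) ℂ) : Matrix ιB ιB ℂ :=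
  Matrix.of fun k l => ∑ i, Ω (i, k) (i, l)

/-- The Choi matrix of a linear map on matrices. -/
def choi {ιA ιB : Type*} [Fintype ιA] [DecidableEq ιA]
    (Φ : Matrix ιA ιA ℂ →ₗ[ℂ] Matrix ιB ιB ℂ) :
    Matrix (ιA × ιB) (ιA × ιB) ℂ :=
  Matrix.of fun p q => Φ (Matrix.single p.1 q.1 1) p.2 q.2

/-- A quantum channel: a completely positive (Choi matrix PSD) trace-preserving
linear map. -/
structure Channel (ιA ιB : Type*) [Fintype ιA] [DecidableEq ιA] [Fintype ιB] where
  map : Matrix ιA ιA ℂ →ₗ[ℂ] Matrix ιB ιB ℂ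
  cp : (choi map).PosSemidef
  tp : ∀ X, (map X).trace = X.trace

/-- The communication value, via the conic program over the separable cone:
`cv(N) = max { Tr[Ω J_N] : Ω separable, Tr_A Ω = I }`. -/
def cv {ιA ιB : Type*} [Fintype ιA] [DecidableEq ιA] [Fintype ιB] [DecidableEq ιB]
    (N : Channel ιA ιB) : ℝ :=
  sSup {r | ∃ Ω : Matrix (ιA × ιB) (ιA × ιB) ℂ,
    IsSep Ω ∧ ptraceA Ω = 1 ∧ r = ((Ω * choi N.map).trace).re}

/-- The operational communication value: supremum over finite families of input
states and POVMs of `∑_x Tr[Π_x N(ρ_x)]`. -/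
def cvOp {ιA ιB : Type*} [Fintype ιA] [DecidableEq ιA] [Fintype ιB] [DecidableEq ιB]
    (N : Channel ιA ιB) : ℝ :=
  sSup {r | ∃ (n : ℕ) (ρ : Fin n → Matrix ιA ιA ℂ) (E : Fin n → Matrix ιB ιB ℂ),
    (∀ x, IsDensity (ρ x)) ∧ (∀ x, (E x).PosSemidef) ∧ (∑ x, E x) = 1 ∧
      r = (∑ x, (E x * N.map (ρ x)).trace).re}

/-- Maximal overlap of a bipartite operator with product unit vectors
(`Λ²`, exponential of minus the geometric measure of entanglement). -/
def lam2 {ιA ιB : Type*} [Fintype ιA] [Fintype ιB]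
    (ω : Matrix (ιA × ιB) (ιA × ιB) ℂ) : ℝ :=
  sSup {r | ∃ (a : ιA → ℂ) (b : ιB → ℂ),
    (∑ i, ‖a i‖ ^ 2) = 1 ∧ (∑ k, ‖b k‖ ^ 2) = 1 ∧
      r = (star (fun p : ιA × ιB => a p.1 * b p.2) ⬝ᵥ
        ω *ᵥ fun p : ιA × ιB => a p.1 * b p.2).re}

end

/-! If `N` replaces every state by `σ`, every strategy scores `∑ₓ Tr[Πₓ σ] = Tr σ = 1`.
Otherwise two input states `ρ₁, ρ₀` have different outputs `σ₁ ≠ σ₀`. Then `σ₁ - σ₀` is a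
nonzero traceless Hermitian matrix, so it has a positive eigenvalue. Sending `ρ₁, ρ₀` and
measuring with the Helstrom test `{E, 1 - E}` (`E` the projection onto the positive
eigenspace of `σ₁ - σ₀`) scores `1 + Tr[E (σ₁ - σ₀)] > 1`. -/

namespace Matrix.IsHermitian

open Unitary

variable {n : Type*} [Fintype n] [DecidableEq n] {Δ : Matrix n n ℂ}

lemma trace_cfc_mul_self (hΔ : Δ.IsHermitian) (f : ℝ → ℝ) :
    (hΔ.cfc f * Δ).trace = ∑ i, ((f (hΔ.eigenvalues i) * hΔ.eigenvalues i : ℝ) : ℂ) := by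
  rw [congrArg (hΔ.cfc f * ·) hΔ.spectral_theorem, IsHermitian.cfc, ← map_mul,
    conjStarAlgAut_apply, trace_mul_cycle, coe_star_mul_self, one_mul, diagonal_mul_diagonal,
    trace_diagonal]
  simp

lemma posSemidef_cfc (hΔ : Δ.IsHermitian) {f : ℝ → ℝ} (hf : ∀ i, 0 ≤ f (hΔ.eigenvalues i)) :
    (hΔ.cfc f).PosSemidef := by
  rw [IsHermitian.cfc, conjStarAlgAut_apply, isUnit_coe.posSemidef_star_right_conjugate_iff]
  exact PosSemidef.diagonal fun i => by simpa using hf i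

lemma one_sub_cfc (hΔ : Δ.IsHermitian) (f : ℝ → ℝ) : 1 - hΔ.cfc f = hΔ.cfc (1 - f) := by
  rw [IsHermitian.cfc, IsHermitian.cfc, ← map_one (conjStarAlgAut ℂ _ hΔ.eigenvectorUnitary),
    ← map_sub, ← diagonal_one, diagonal_sub]
  congr 2
  ext i
  simp

lemma exists_eigenvalues_pos (hΔ : Δ.IsHermitian) (hne : Δ ≠ 0) (htr : Δ.trace = 0) :
    ∃ i, 0 < hΔ.eigenvalues i := by
  by_contra! hle
  have hsum : ∑ i, hΔ.eigenvalues i = 0 := by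
    have := hΔ.trace_eq_sum_eigenvalues.symm.trans htr
    rw [← RCLike.ofReal_sum] at this
    exact RCLike.ofReal_eq_zero.mp this
  have hzero := (Finset.sum_eq_zero_iff_of_nonpos fun i _ => hle i).mp hsum
  exact hne (hΔ.eigenvalues_eq_zero_iff.mp (funext fun i => hzero i (Finset.mem_univ i)))

end Matrix.IsHermitian

lemma IsDensity.exists_helstrom_test_of_ne {n : Type*} [Fintype n] [DecidableEq n]
    {σ₁ σ₀ : Matrix n n ℂ} (h₁ : IsDensity σ₁) (h₀ : IsDensity σ₀) (hne : σ₁ ≠ σ₀) :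
    ∃ E : Matrix n n ℂ, E.PosSemidef ∧ (1 - E).PosSemidef ∧
      0 < ((E * (σ₁ - σ₀)).trace).re := by
  have hΔ : (σ₁ - σ₀).IsHermitian := h₁.1.1.sub h₀.1.1
  have htr : (σ₁ - σ₀).trace = 0 := by rw [trace_sub, h₁.2, h₀.2, sub_self]
  obtain ⟨i, hi⟩ := hΔ.exists_eigenvalues_pos (sub_ne_zero.mpr hne) htr
  let f : ℝ → ℝ := fun x => if 0 < x then 1 else 0
  have hf_mul_nonneg : ∀ x, 0 ≤ f x * x := fun x => by
    simp only [f]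
    split_ifs with hx
    · simpa using hx.le
    · simp
  refine ⟨hΔ.cfc f, hΔ.posSemidef_cfc fun j => ?_,
    hΔ.one_sub_cfc f ▸ hΔ.posSemidef_cfc fun j => ?_, ?_⟩
  · by_cases hx : 0 < hΔ.eigenvalues j <;> simp [f, hx]
  · by_cases hx : 0 < hΔ.eigenvalues j <;> simp [f, hx]
  · rw [hΔ.trace_cfc_mul_self, ← Complex.ofReal_sum, Complex.ofReal_re]
    exact Finset.sum_pos' (fun j _ => hf_mul_nonneg _) ⟨i, Finset.mem_univ i, by simp [f, hi]⟩

section Choi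

variable {ιA ιB : Type*} [Fintype ιA] [DecidableEq ιA]

lemma map_apply_eq_sum_choi (Φ : Matrix ιA ιA ℂ →ₗ[ℂ] Matrix ιB ιB ℂ) (X : Matrix ιA ιA ℂ)
    (k l : ιB) : Φ X k l = ∑ i, ∑ j, X i j * choi Φ (i, k) (j, l) := by
  have hsingle : ∀ i j, single i j (X i j) = X i j • single i j (1 : ℂ) := fun i j => by
    rw [smul_single, smul_eq_mul, mul_one]
  conv_lhs => rw [matrix_eq_sum_single X]
  simp only [hsingle, map_sum, _root_.map_smul, Matrix.sum_apply, Matrix.smul_apply, smul_eq_mul,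
    choi, of_apply]

variable [Fintype ιB] [DecidableEq ιB]

lemma map_conjTranspose_mul_self_eq_sum {m : Type*} [Fintype m]
    (Φ : Matrix ιA ιA ℂ →ₗ[ℂ] Matrix ιB ιB ℂ) (B : Matrix m ιA ℂ) :
    Φ (Bᴴ * B) = ∑ r, (of fun (p : ιA × ιB) l => B r p.1 * (1 : Matrix ιB ιB ℂ) p.2 l)ᴴ *
      choi Φ * of fun (p : ιA × ιB) l => B r p.1 * (1 : Matrix ιB ιB ℂ) p.2 l := by
  ext k l
  simp only [map_apply_eq_sum_choi, Matrix.sum_apply, mul_apply, conjTranspose_apply, of_apply,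
    one_apply, Fintype.sum_prod_type, apply_ite star, star_zero, mul_ite, ite_mul, mul_one,
    mul_zero, zero_mul, Finset.sum_ite_eq', Finset.mem_univ, if_true, Finset.sum_mul]
  conv_rhs => rw [Finset.sum_comm]; enter [2, j]; rw [Finset.sum_comm]
  rw [Finset.sum_comm]
  refine Finset.sum_congr rfl fun j _ => Finset.sum_congr rfl fun i _ =>
    Finset.sum_congr rfl fun r _ => ?_
  ring

open scoped MatrixOrder Matrix.Norms.L2Operator in
lemma posSemidef_map_of_posSemidef_choi {Φ : Matrix ιA ιA ℂ →ₗ[ℂ] Matrix ιB ιB ℂ}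
    (hΦ : (choi Φ).PosSemidef) {X : Matrix ιA ιA ℂ} (hX : X.PosSemidef) : (Φ X).PosSemidef := by
  obtain ⟨B, rfl⟩ := CStarAlgebra.nonneg_iff_eq_star_mul_self.mp hX.nonneg
  rw [star_eq_conjTranspose, map_conjTranspose_mul_self_eq_sum]
  exact posSemidef_sum _ fun r _ => hΦ.conjTranspose_mul_mul_same _

end Choi

lemma isDensity_diagonal_single {ι : Type*} [Fintype ι] [DecidableEq ι] (i : ι) :
    IsDensity (diagonal (Pi.single i 1) : Matrix ι ι ℂ) :=
  ⟨PosSemidef.diagonal (Pi.single_nonneg.mpr zero_le_one), by simp [trace_diagonal]⟩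

lemma Real.le_sSup_of_sSup_ne_zero {s : Set ℝ} {a : ℝ} (hs : sSup s ≠ 0) (ha : a ∈ s) :
    a ≤ sSup s :=
  le_csSup (by by_contra h; exact hs (Real.sSup_of_not_bddAbove h)) ha

section cvOp

variable {ιA ιB : Type*} [Fintype ιA] [DecidableEq ιA] [Fintype ιB] [DecidableEq ιB]

lemma Channel.isDensity_map (N : Channel ιA ιB) {ρ : Matrix ιA ιA ℂ} (hρ : IsDensity ρ) :
    IsDensity (N.map ρ) :=
  ⟨posSemidef_map_of_posSemidef_choi N.cp hρ.1, (N.tp ρ).trans hρ.2⟩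

def cvOpValues (N : Channel ιA ιB) : Set ℝ :=
  {r | ∃ (n : ℕ) (ρ : Fin n → Matrix ιA ιA ℂ) (E : Fin n → Matrix ιB ιB ℂ),
    (∀ x, IsDensity (ρ x)) ∧ (∀ x, (E x).PosSemidef) ∧ (∑ x, E x) = 1 ∧
      r = (∑ x, (E x * N.map (ρ x)).trace).re}

lemma cvOp_eq_sSup_cvOpValues (N : Channel ιA ιB) : cvOp N = sSup (cvOpValues N) := rfl

lemma one_add_re_trace_mem_cvOpValues (N : Channel ιA ιB) {ρ₁ ρ₀ : Matrix ιA ιA ℂ}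
    (h₁ : IsDensity ρ₁) (h₀ : IsDensity ρ₀) {E : Matrix ιB ιB ℂ} (hE : E.PosSemidef)
    (hE' : (1 - E).PosSemidef) :
    1 + ((E * (N.map ρ₁ - N.map ρ₀)).trace).re ∈ cvOpValues N := by
  refine ⟨2, ![ρ₁, ρ₀], ![E, 1 - E], Fin.forall_fin_two.mpr ⟨h₁, h₀⟩,
    Fin.forall_fin_two.mpr ⟨hE, hE'⟩, by simp [Fin.sum_univ_two], ?_⟩
  simp only [Fin.sum_univ_two, cons_val_zero, cons_val_one, mul_sub, sub_mul, one_mul, trace_sub,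
    N.tp, h₀.2, Complex.add_re, Complex.sub_re, Complex.one_re]
  ring

lemma cvOpValues_eq_singleton_of_replacer [Nonempty ιA] (N : Channel ιA ιB)
    {σ : Matrix ιB ιB ℂ} (hσ : IsDensity σ) (hN : ∀ ρ, IsDensity ρ → N.map ρ = σ) :
    cvOpValues N = {1} := by
  ext r
  constructor
  · rintro ⟨n, ρ, E, hρ, -, hE, rfl⟩
    simp_rw [hN _ (hρ _), ← trace_sum, ← Finset.sum_mul, hE, one_mul, hσ.2, Complex.one_re]
    rfl
  · rintro rfl
    obtain ⟨i⟩ := ‹Nonempty ιA›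
    have hρ := isDensity_diagonal_single i
    exact ⟨1, fun _ => _, fun _ => 1, fun _ => hρ, fun _ => PosSemidef.one, by simp,
      by simp [N.tp, hρ.2]⟩

end cvOp

theorem cv_eq_one_iff_replacer_general {dA dB : ℕ} (hA : 0 < dA)
    (N : Channel (Fin dA) (Fin dB)) :
    cvOp N = 1 ↔
      ∃ σ : Matrix (Fin dB) (Fin dB) ℂ, IsDensity σ ∧
        ∀ ρ : Matrix (Fin dA) (Fin dA) ℂ, IsDensity ρ → N.map ρ = σ := by
  constructor
  · intro hcv
    rw [cvOp_eq_sSup_cvOpValues] at hcv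
    have hρ₀ := isDensity_diagonal_single (⟨0, hA⟩ : Fin dA)
    refine ⟨_, N.isDensity_map hρ₀, fun ρ hρ => ?_⟩
    by_contra hne
    obtain ⟨E, hE, hE', hpos⟩ :=
      (N.isDensity_map hρ).exists_helstrom_test_of_ne (N.isDensity_map hρ₀) hne
    have hle := Real.le_sSup_of_sSup_ne_zero (hcv ▸ one_ne_zero)
      (one_add_re_trace_mem_cvOpValues N hρ hρ₀ hE hE')
    rw [hcv] at hle
    linarith
  · rintro ⟨σ, hσ, hN⟩
    have : Nonempty (Fin dA) := ⟨⟨0, hA⟩⟩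
    rw [cvOp_eq_sSup_cvOpValues, cvOpValues_eq_singleton_of_replacer N hσ hN, csSup_singleton]

/-- `cv(N) = 1` iff `N` is a replacer channel, i.e. there is a fixed state `σ`
with `N(ρ) = σ` for all density operators `ρ`. -/
theorem cv_eq_one_iff_replacer {dA dB : ℕ} (hA : 0 < dA) (hB : 0 < dB)
    (N : Channel (Fin dA) (Fin dB)) :
    cvOp N = 1 ↔
      ∃ σ : Matrix (Fin dB) (Fin dB) ℂ, IsDensity σ ∧
        ∀ ρ : Matrix (Fin dA) (Fin dA) ℂ, IsDensity ρ → N.map ρ = σ :=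
  cv_eq_one_iff_replacer_general hA N
end

section
/- For a quantum channel N: CPTP(A→B) with Choi matrix J_N, the communication value equals the maximum of Tr[Ω J_N] over all separable positive operators Ω ∈ SEP(A:B) satisfying Tr_A[Ω] = I^B. -/
open scoped BigOperators Kronecker ComplexOrder
open Matrix

/-!
A strategy `(ρ_x, Π_x)` gives the separable operator `Ω = ∑_x ρ_xᵀ ⊗ Π_x`, for which
`Tr_A Ω = ∑_x Π_x = I` and `Tr[Ω J_N] = ∑_x Tr[Π_x N(ρ_x)]`. Conversely, each product term
`a ⊗ b` of a separable `Ω` can be rewritten as `ρᵀ ⊗ (Tr a) b` with the state `ρ = aᵀ / Tr a`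
(or as `σᵀ ⊗ 0` for an arbitrary state `σ` when `a = 0`), so every feasible `Ω` arises from a
strategy with the same value.
-/

section

variable {ιA ιB : Type*} [Fintype ιA]

theorem trace_kronecker_mul_choi [Fintype ιB] [DecidableEq ιA]
    (Φ : Matrix ιA ιA ℂ →ₗ[ℂ] Matrix ιB ιB ℂ) (a : Matrix ιA ιA ℂ) (b : Matrix ιB ιB ℂ) :
    ((a ⊗ₖ b) * choi Φ).trace = (b * Φ aᵀ).trace := by
  conv_rhs => rw [matrix_eq_sum_single aᵀ]
  simp only [map_sum, Matrix.mul_sum, trace_sum, transpose_apply]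
  simp only [trace, diag, mul_apply, Fintype.sum_prod_type, kroneckerMap_apply, choi, of_apply]
  refine (Finset.sum_congr rfl fun _ _ => Finset.sum_comm).trans (Finset.sum_comm.trans ?_)
  refine Finset.sum_congr rfl fun q₁ _ => Finset.sum_congr rfl fun p₁ _ =>
    Finset.sum_congr rfl fun p₂ _ => Finset.sum_congr rfl fun q₂ _ => ?_
  rw [show single q₁ p₁ (a p₁ q₁) = a p₁ q₁ • single q₁ p₁ 1 by simp [smul_single], map_smul,
    Matrix.smul_apply, smul_eq_mul]
  ring

theorem ptraceA_kronecker (a : Matrix ιA ιA ℂ) (b : Matrix ιB ιB ℂ) :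
    ptraceA (a ⊗ₖ b) = a.trace • b := by
  ext k l
  simp [ptraceA, trace, Finset.sum_mul]

theorem ptraceA_sum {ι : Type*} [Fintype ι] (Ω : ι → Matrix (ιA × ιB) (ιA × ιB) ℂ) :
    ptraceA (∑ x, Ω x) = ∑ x, ptraceA (Ω x) := by
  ext k l
  simp only [ptraceA, Matrix.sum_apply, of_apply]
  exact Finset.sum_comm

section Ensemble

variable {ι : Type*} [Fintype ι] (ρ : ι → Matrix ιA ιA ℂ) (E : ι → Matrix ιB ιB ℂ)

theorem ptraceA_sum_transpose_kronecker (hρ : ∀ x, (ρ x).trace = 1) :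
    ptraceA (∑ x, (ρ x)ᵀ ⊗ₖ E x) = ∑ x, E x := by
  simp [ptraceA_sum, ptraceA_kronecker, hρ]

theorem trace_sum_transpose_kronecker_mul_choi [Fintype ιB] [DecidableEq ιA]
    (Φ : Matrix ιA ιA ℂ →ₗ[ℂ] Matrix ιB ιB ℂ) :
    ((∑ x, (ρ x)ᵀ ⊗ₖ E x) * choi Φ).trace = ∑ x, (E x * Φ (ρ x)).trace := by
  simp [Finset.sum_mul, trace_sum, trace_kronecker_mul_choi]

end Ensemble

theorem exists_isDensity (ι : Type*) [Fintype ι] [DecidableEq ι] [Nonempty ι] :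
    ∃ σ : Matrix ι ι ℂ, IsDensity σ := by
  obtain ⟨i⟩ := ‹Nonempty ι›
  exact ⟨diagonal (Pi.single i 1), PosSemidef.diagonal (Pi.single_nonneg.2 zero_le_one),
    by simp [trace_diagonal]⟩

theorem exists_isDensity_kronecker_eq [DecidableEq ιA] [Nonempty ιA] {a : Matrix ιA ιA ℂ}
    {b : Matrix ιB ιB ℂ} (ha : a.PosSemidef) (hb : b.PosSemidef) :
    ∃ ρ E, IsDensity ρ ∧ E.PosSemidef ∧ a ⊗ₖ b = ρᵀ ⊗ₖ E := by
  by_cases ha₀ : a = 0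
  · obtain ⟨σ, hσ⟩ := exists_isDensity ιA
    exact ⟨σ, 0, hσ, .zero, by simp [ha₀]⟩
  have ht : a.trace ≠ 0 := mt ha.trace_eq_zero_iff.1 ha₀
  refine ⟨a.trace⁻¹ • aᵀ, a.trace • b,
    ⟨ha.transpose.smul (inv_nonneg_of_nonneg ha.trace_nonneg), by simp [ht]⟩,
    hb.smul ha.trace_nonneg, ?_⟩
  rw [transpose_smul, transpose_transpose, smul_kronecker, kronecker_smul, smul_smul,
    inv_mul_cancel₀ ht, one_smul]

theorem IsSep.exists_sum_transpose_kronecker [Fintype ιB] [DecidableEq ιA] [Nonempty ιA]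
    {Ω : Matrix (ιA × ιB) (ιA × ιB) ℂ} (hΩ : IsSep Ω) :
    ∃ (n : ℕ) (ρ : Fin n → Matrix ιA ιA ℂ) (E : Fin n → Matrix ιB ιB ℂ),
      (∀ x, IsDensity (ρ x)) ∧ (∀ x, (E x).PosSemidef) ∧ Ω = ∑ x, (ρ x)ᵀ ⊗ₖ E x := by
  obtain ⟨n, a, b, ha, hb, rfl⟩ := hΩ
  choose ρ E hρ hE hab using fun x => exists_isDensity_kronecker_eq (ha x) (hb x)
  exact ⟨n, ρ, E, hρ, hE, Finset.sum_congr rfl fun x _ => hab x⟩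

end

theorem cvOp_eq_conic_general {ιA ιB : Type*} [Fintype ιA] [DecidableEq ιA]
    [Fintype ιB] [DecidableEq ιB] [Nonempty ιA]
    (N : Channel ιA ιB) :
    cvOp N = sSup {r | ∃ Ω : Matrix (ιA × ιB) (ιA × ιB) ℂ,
      IsSep Ω ∧ ptraceA Ω = 1 ∧ r = ((Ω * choi N.map).trace).re} := by
  refine congrArg sSup (Set.ext fun r => ⟨?_, ?_⟩)
  · rintro ⟨n, ρ, E, hρ, hE, hE₁, rfl⟩
    refine ⟨∑ x, (ρ x)ᵀ ⊗ₖ E x, ⟨n, _, E, fun x => (hρ x).1.transpose, hE, rfl⟩, ?_, ?_⟩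
    · rw [ptraceA_sum_transpose_kronecker ρ E fun x => (hρ x).2, hE₁]
    · rw [trace_sum_transpose_kronecker_mul_choi]
  · rintro ⟨Ω, hΩ, hΩ₁, rfl⟩
    obtain ⟨n, ρ, E, hρ, hE, rfl⟩ := hΩ.exists_sum_transpose_kronecker
    refine ⟨n, ρ, E, hρ, hE, ?_, by rw [trace_sum_transpose_kronecker_mul_choi]⟩
    rwa [ptraceA_sum_transpose_kronecker ρ E fun x => (hρ x).2] at hΩ₁

/-- The communication value equals the maximum of `Tr[Ω J_N]` over separable
positive operators `Ω` with `Tr_A Ω = I`. -/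
theorem cvOp_eq_conic {ιA ιB : Type*} [Fintype ιA] [DecidableEq ιA]
    [Fintype ιB] [DecidableEq ιB] [Nonempty ιA] [Nonempty ιB]
    (N : Channel ιA ιB) :
    cvOp N = sSup {r | ∃ Ω : Matrix (ιA × ιB) (ιA × ιB) ℂ,
      IsSep Ω ∧ ptraceA Ω = 1 ∧ r = ((Ω * choi N.map).trace).re} :=
  cvOp_eq_conic_general N
end

section
/- If a bipartite density operator ρ on A⊗B is component-wise non-negative in some orthonormal product basis, and σ is any bipartite density operator on A'⊗B', then Λ²(ρ ⊗ σ) = Λ²(ρ)·Λ²(σ), where the tensor product is across the cut AA':BB'. -/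
open scoped BigOperators Kronecker ComplexOrder
open Matrix

/-- Tensor product of bipartite operators, reindexed along the cut `AA' : BB'`. -/
def tensorCut {ιA ιB ιA' ιB' : Type*}
    (ρ : Matrix (ιA × ιB) (ιA × ιB) ℂ) (σ : Matrix (ιA' × ιB') (ιA' × ιB') ℂ) :
    Matrix ((ιA × ιA') × (ιB × ιB')) ((ιA × ιA') × (ιB × ιB')) ℂ :=
  Matrix.of fun p q =>
    ρ (p.1.1, p.2.1) (q.1.1, q.2.1) * σ (p.1.2, p.2.2) (q.1.2, q.2.2)

/-- A bipartite operator is component-wise non-negative if there is an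
orthonormal product basis in which all its matrix entries are non-negative reals. -/
def CompNonneg {ιA ιB : Type*} [Fintype ιA] [DecidableEq ιA]
    [Fintype ιB] [DecidableEq ιB] (ρ : Matrix (ιA × ιB) (ιA × ιB) ℂ) : Prop :=
  ∃ (u : ιA → ιA → ℂ) (v : ιB → ιB → ℂ),
    (∀ i i', star (u i) ⬝ᵥ u i' = if i = i' then 1 else 0) ∧
    (∀ j j', star (v j) ⬝ᵥ v j' = if j = j' then 1 else 0) ∧
    ∀ i j i' j',
      0 ≤ ((star fun p : ιA × ιB => u i p.1 * v j p.2) ⬝ᵥ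
            ρ *ᵥ fun p : ιA × ιB => u i' p.1 * v j' p.2).re ∧
      ((star fun p : ιA × ιB => u i p.1 * v j p.2) ⬝ᵥ
            ρ *ᵥ fun p : ιA × ιB => u i' p.1 * v j' p.2).im = 0

/-
Write λ for Λ². Testing λ(ρ ⊗ σ) on tensor products of maximisers for ρ and σ gives
λ(ρ)·λ(σ) ≤ λ(ρ ⊗ σ). Conversely, let x on AA' and y on BB' be unit vectors and let {u_i ⊗ v_j}
be the product basis in which the entries ρ_{k k'} of ρ are non-negative. Expanding x = ∑_i u_i ⊗ α_i and
y = ∑_j v_j ⊗ β_j gives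
  ⟨x ⊗ y| ρ ⊗ σ |x ⊗ y⟩ = ∑_{k,k'} ρ_{k k'} ⟨α_i ⊗ β_j| σ |α_{i'} ⊗ β_{j'}⟩,  k = (i,j), k' = (i',j').
Since every ρ_{k k'} ≥ 0, the Cauchy–Schwarz inequality for σ together with
⟨α ⊗ β| σ |α ⊗ β⟩ ≤ λ(σ)‖α‖²‖β‖² bounds the real part by
λ(σ) ∑_{k,k'} ρ_{k k'} ‖α_i‖‖β_j‖‖α_{i'}‖‖β_{j'}‖, which is λ(σ) times the overlap of ρ with the
product vector (∑_i ‖α_i‖ u_i) ⊗ (∑_j ‖β_j‖ v_j). By Parseval both factors are unit vectors, so this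
is at most λ(σ)·λ(ρ).
-/

def prodVec {ι₁ ι₂ : Type*} (a : ι₁ → ℂ) (b : ι₂ → ℂ) : ι₁ × ι₂ → ℂ :=
  fun p => a p.1 * b p.2

def tensorCutVec {ιA ιB ιA' ιB' : Type*} (e : ιA × ιB → ℂ) (f : ιA' × ιB' → ℂ) :
    (ιA × ιA') × (ιB × ιB') → ℂ :=
  fun p => e (p.1.1, p.2.1) * f (p.1.2, p.2.2)

def basisCoeff {n m : Type*} [Fintype n] (u : n → n → ℂ) (x : n × m → ℂ) (i : n) : m → ℂ :=
  fun j => star (u i) ⬝ᵥ fun p => x (p, j)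

def IsOrthonormalBasis {n : Type*} [Fintype n] [DecidableEq n] (u : n → n → ℂ) : Prop :=
  ∀ i i', star (u i) ⬝ᵥ u i' = if i = i' then 1 else 0

def unitVecs (ι : Type*) [Fintype ι] : Set (ι → ℂ) :=
  {a | ∑ i, ‖a i‖ ^ 2 = 1}

def overlap {ι₁ ι₂ : Type*} [Fintype ι₁] [Fintype ι₂] (ω : Matrix (ι₁ × ι₂) (ι₁ × ι₂) ℂ)
    (a : ι₁ → ℂ) (b : ι₂ → ℂ) : ℝ :=
  (star (prodVec a b) ⬝ᵥ ω *ᵥ prodVec a b).re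

section Sesquilinear

variable {ι n m K : Type*} [Fintype ι] [Fintype n] [Fintype m] [Fintype K]

lemma sum_norm_sq_eq_re_dotProduct (a : ι → ℂ) : ∑ i, ‖a i‖ ^ 2 = (star a ⬝ᵥ a).re := by
  simp [dotProduct, Complex.re_sum, Complex.conj_mul', ← Complex.ofReal_pow]

lemma star_dotProduct_mulVec_eq_sum (M : Matrix m n ℂ) (x : m → ℂ) (y : n → ℂ) :
    star x ⬝ᵥ M *ᵥ y = ∑ p, ∑ q, star (x p) * M p q * y q := by
  simp [dotProduct, mulVec, Finset.mul_sum, mul_assoc]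

lemma star_sum_dotProduct_mulVec_sum (M : Matrix n n ℂ) (g : K → n → ℂ) :
    star (∑ k, g k) ⬝ᵥ M *ᵥ ∑ k, g k = ∑ k, ∑ k', star (g k) ⬝ᵥ M *ᵥ g k' := by
  simp only [star_sum, sum_dotProduct, mulVec_sum, dotProduct_sum]
  exact Finset.sum_comm

lemma star_smul_dotProduct_mulVec_smul (M : Matrix n n ℂ) (c d : ℂ) (v w : n → ℂ) :
    star (c • v) ⬝ᵥ M *ᵥ (d • w) = star c * d * (star v ⬝ᵥ M *ᵥ w) := by
  simp only [star_smul, mulVec_smul, smul_dotProduct, dotProduct_smul, smul_eq_mul]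
  ring

lemma star_sum_smul_dotProduct_mulVec_sum_smul (M : Matrix n n ℂ) (c : K → ℂ) (g : K → n → ℂ) :
    star (∑ k, c k • g k) ⬝ᵥ M *ᵥ ∑ k, c k • g k
      = ∑ k, ∑ k', star (c k) * c k' * (star (g k) ⬝ᵥ M *ᵥ g k') := by
  simp only [star_sum_dotProduct_mulVec_sum, star_smul_dotProduct_mulVec_smul]

lemma Matrix.PosSemidef.norm_dotProduct_mulVec_sq_le {𝕜 : Type*} [RCLike 𝕜] {M : Matrix n n 𝕜}
    (hM : M.PosSemidef) (x y : n → 𝕜) :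
    ‖star x ⬝ᵥ M *ᵥ y‖ ^ 2 ≤ RCLike.re (star x ⬝ᵥ M *ᵥ x) * RCLike.re (star y ⬝ᵥ M *ᵥ y) := by
  let _ := M.toSeminormedAddCommGroup hM
  let _ := M.toInnerProductSpace hM
  have hinner : ∀ a b : n → 𝕜, inner 𝕜 a b = star a ⬝ᵥ M *ᵥ b := fun a b => dotProduct_comm _ _
  have h := inner_mul_inner_self_le (𝕜 := 𝕜) x y
  rw [norm_inner_symm y x, ← sq] at h
  simpa only [hinner] using h

end Sesquilinear

section Orthonormal

variable {n m : Type*} [Fintype n] [DecidableEq n] {u : n → n → ℂ}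

lemma sum_norm_sq_sum_smul (hu : IsOrthonormalBasis u)
    (c : n → ℂ) : ∑ p, ‖(∑ i, c i • u i) p‖ ^ 2 = ∑ i, ‖c i‖ ^ 2 := by
  rw [sum_norm_sq_eq_re_dotProduct, sum_norm_sq_eq_re_dotProduct, star_sum, sum_dotProduct]
  simp_rw [dotProduct_sum, star_smul, smul_dotProduct, dotProduct_smul, hu _ _]
  simp [dotProduct]

lemma sum_dotProduct_smul_eq_self (hu : IsOrthonormalBasis u)
    (w : n → ℂ) : ∑ i, (star (u i) ⬝ᵥ w) • u i = w := by
  let W : Matrix n n ℂ := Matrix.of fun i p => star (u i p)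
  have hW : W * star W = 1 := by
    ext i i'
    simpa [W, mul_apply, dotProduct, one_apply] using hu i i'
  funext p
  calc (∑ i, (star (u i) ⬝ᵥ w) • u i) p = (star W *ᵥ (W *ᵥ w)) p := by
        simp [W, mulVec, dotProduct, Finset.sum_apply, mul_comm]
    _ = w p := by rw [mulVec_mulVec, mul_eq_one_comm.mp hW, one_mulVec]

lemma sum_norm_sq_dotProduct (hu : IsOrthonormalBasis u)
    (w : n → ℂ) : ∑ i, ‖star (u i) ⬝ᵥ w‖ ^ 2 = ∑ p, ‖w p‖ ^ 2 := by
  conv_rhs => rw [← sum_dotProduct_smul_eq_self hu w]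
  exact (sum_norm_sq_sum_smul hu _).symm

lemma sum_prodVec_basisCoeff (hu : IsOrthonormalBasis u)
    (x : n × m → ℂ) : ∑ i, prodVec (u i) (basisCoeff u x i) = x := by
  funext ⟨p, j⟩
  simpa [prodVec, basisCoeff, Finset.sum_apply, mul_comm] using
    congrFun (sum_dotProduct_smul_eq_self hu fun p => x (p, j)) p

lemma sum_norm_sq_sum_sqrt_smul [Fintype m] (hu : IsOrthonormalBasis u)
    (x : n × m → ℂ) :
    ∑ p, ‖(∑ i, (√(∑ j, ‖basisCoeff u x i j‖ ^ 2) : ℂ) • u i) p‖ ^ 2 = ∑ q, ‖x q‖ ^ 2 := by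
  rw [sum_norm_sq_sum_smul hu, Fintype.sum_prod_type_right]
  calc ∑ i, ‖(√(∑ j, ‖basisCoeff u x i j‖ ^ 2) : ℂ)‖ ^ 2 = ∑ i, ∑ j, ‖basisCoeff u x i j‖ ^ 2 := by
        refine Finset.sum_congr rfl fun i _ => ?_
        rw [Complex.norm_real, Real.norm_eq_abs, sq_abs, Real.sq_sqrt (by positivity)]
    _ = ∑ j, ∑ p, ‖x (p, j)‖ ^ 2 := by
        rw [Finset.sum_comm]
        exact Finset.sum_congr rfl fun j _ => sum_norm_sq_dotProduct hu _

end Orthonormal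

section Overlap

variable {ι ι₁ ι₂ : Type*} [Fintype ι] [Fintype ι₁] [Fintype ι₂]

lemma sum_norm_sq_prodVec (a : ι₁ → ℂ) (b : ι₂ → ℂ) :
    ∑ p, ‖prodVec a b p‖ ^ 2 = (∑ i, ‖a i‖ ^ 2) * ∑ j, ‖b j‖ ^ 2 := by
  simp [prodVec, Fintype.sum_prod_type, mul_pow, Finset.sum_mul_sum]

lemma sum_norm_sq_smul (c : ℂ) (a : ι → ℂ) :
    ∑ i, ‖(c • a) i‖ ^ 2 = ‖c‖ ^ 2 * ∑ i, ‖a i‖ ^ 2 := by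
  simp [mul_pow, Finset.mul_sum]

lemma isCompact_unitVecs : IsCompact (unitVecs ι) := by
  refine Metric.isCompact_of_isClosed_isBounded (isClosed_eq (by fun_prop) continuous_const)
    ((Metric.isBounded_closedBall (x := 0) (r := 1)).subset fun a ha => ?_)
  rw [mem_closedBall_zero_iff, pi_norm_le_iff_of_nonneg zero_le_one]
  intro i
  rw [← sq_le_one_iff₀ (norm_nonneg _), ← show ∑ i, ‖a i‖ ^ 2 = 1 from ha]
  exact Finset.single_le_sum (f := fun i => ‖a i‖ ^ 2) (fun i _ => by positivity)
    (Finset.mem_univ i)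

lemma unitVecs_nonempty [Nonempty ι] : (unitVecs ι).Nonempty := by
  classical
  obtain ⟨i⟩ := ‹Nonempty ι›
  exact ⟨Pi.single i 1, by simp [unitVecs, Pi.single_apply, apply_ite (fun z : ℂ => ‖z‖ ^ 2)]⟩

lemma inv_sqrt_smul_mem_unitVecs {a : ι → ℂ} (ha : ∑ i, ‖a i‖ ^ 2 ≠ 0) :
    (((√(∑ i, ‖a i‖ ^ 2))⁻¹ : ℝ) : ℂ) • a ∈ unitVecs ι := by
  rw [unitVecs, Set.mem_ofPred_eq, sum_norm_sq_smul, Complex.norm_real,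
    Real.norm_of_nonneg (by positivity), inv_pow, Real.sq_sqrt (by positivity),
    inv_mul_cancel₀ ha]

lemma lam2_eq_sSup_image (ω : Matrix (ι₁ × ι₂) (ι₁ × ι₂) ℂ) :
    lam2 ω = sSup ((fun ab => overlap ω ab.1 ab.2) '' (unitVecs ι₁ ×ˢ unitVecs ι₂)) := by
  unfold lam2
  congr 1
  ext r
  constructor
  · rintro ⟨a, b, ha, hb, rfl⟩
    exact ⟨(a, b), ⟨ha, hb⟩, rfl⟩
  · rintro ⟨⟨a, b⟩, ⟨ha, hb⟩, rfl⟩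
    exact ⟨a, b, ha, hb, rfl⟩

lemma isCompact_overlap_image (ω : Matrix (ι₁ × ι₂) (ι₁ × ι₂) ℂ) :
    IsCompact ((fun ab => overlap ω ab.1 ab.2) '' (unitVecs ι₁ ×ˢ unitVecs ι₂)) :=
  (isCompact_unitVecs.prod isCompact_unitVecs).image (by unfold overlap prodVec; fun_prop)

lemma overlap_le_lam2 (ω : Matrix (ι₁ × ι₂) (ι₁ × ι₂) ℂ) {a : ι₁ → ℂ} {b : ι₂ → ℂ}
    (ha : a ∈ unitVecs ι₁) (hb : b ∈ unitVecs ι₂) : overlap ω a b ≤ lam2 ω := by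
  rw [lam2_eq_sSup_image]
  exact le_csSup (isCompact_overlap_image ω).bddAbove ⟨(a, b), ⟨ha, hb⟩, rfl⟩

lemma exists_overlap_eq_lam2 [Nonempty ι₁] [Nonempty ι₂] (ω : Matrix (ι₁ × ι₂) (ι₁ × ι₂) ℂ) :
    ∃ a ∈ unitVecs ι₁, ∃ b ∈ unitVecs ι₂, overlap ω a b = lam2 ω := by
  obtain ⟨⟨a, b⟩, ⟨ha, hb⟩, h⟩ := (isCompact_overlap_image ω).sSup_mem
    ((unitVecs_nonempty.prod unitVecs_nonempty).image _)
  exact ⟨a, ha, b, hb, h.trans (lam2_eq_sSup_image ω).symm⟩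

lemma lam2_nonneg [Nonempty ι₁] [Nonempty ι₂] {ω : Matrix (ι₁ × ι₂) (ι₁ × ι₂) ℂ}
    (hω : ω.PosSemidef) : 0 ≤ lam2 ω := by
  obtain ⟨a, -, b, -, h⟩ := exists_overlap_eq_lam2 ω
  exact h ▸ hω.re_dotProduct_nonneg _

lemma overlap_ofReal_smul (ω : Matrix (ι₁ × ι₂) (ι₁ × ι₂) ℂ) (s t : ℝ) (a : ι₁ → ℂ)
    (b : ι₂ → ℂ) : overlap ω ((s : ℂ) • a) ((t : ℂ) • b) = (s * t) ^ 2 * overlap ω a b := by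
  have h : prodVec ((s : ℂ) • a) ((t : ℂ) • b) = ((s * t : ℝ) : ℂ) • prodVec a b := by
    funext p
    simp only [prodVec, Pi.smul_apply, smul_eq_mul, Complex.ofReal_mul]
    ring
  rw [overlap, overlap, h, star_smul_dotProduct_mulVec_smul, Complex.star_def,
    Complex.conj_ofReal, ← Complex.ofReal_mul, Complex.re_ofReal_mul, sq]

lemma overlap_le_lam2_mul (ω : Matrix (ι₁ × ι₂) (ι₁ × ι₂) ℂ) (a : ι₁ → ℂ) (b : ι₂ → ℂ) :
    overlap ω a b ≤ lam2 ω * ((∑ i, ‖a i‖ ^ 2) * ∑ j, ‖b j‖ ^ 2) := by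
  by_cases h0 : (∑ i, ‖a i‖ ^ 2) * ∑ j, ‖b j‖ ^ 2 = 0
  · have hab : prodVec a b = 0 := by
      rw [← sum_norm_sq_prodVec, Finset.sum_eq_zero_iff_of_nonneg fun _ _ => by positivity] at h0
      funext p
      simpa using h0 p (Finset.mem_univ p)
    simp [overlap, hab, h0]
  obtain ⟨ha, hb⟩ := mul_ne_zero_iff.mp h0
  set s := √(∑ i, ‖a i‖ ^ 2)
  set t := √(∑ j, ‖b j‖ ^ 2)
  have hs : s ^ 2 = ∑ i, ‖a i‖ ^ 2 := Real.sq_sqrt (by positivity)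
  have ht : t ^ 2 = ∑ j, ‖b j‖ ^ 2 := Real.sq_sqrt (by positivity)
  have hst : s * t ≠ 0 := by positivity
  calc overlap ω a b = (s * t) ^ 2 * overlap ω (((s⁻¹ : ℝ) : ℂ) • a) (((t⁻¹ : ℝ) : ℂ) • b) := by
        rw [overlap_ofReal_smul, ← mul_assoc, ← mul_pow,
          show s * t * (s⁻¹ * t⁻¹) = 1 by rw [← mul_inv, mul_inv_cancel₀ hst], one_pow, one_mul]
    _ ≤ (s * t) ^ 2 * lam2 ω := by
        gcongr
        exact overlap_le_lam2 ω (inv_sqrt_smul_mem_unitVecs ha) (inv_sqrt_smul_mem_unitVecs hb)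
    _ = lam2 ω * ((∑ i, ‖a i‖ ^ 2) * ∑ j, ‖b j‖ ^ 2) := by rw [mul_pow, hs, ht, mul_comm]

lemma norm_star_prodVec_dotProduct_mulVec_le {σ : Matrix (ι₁ × ι₂) (ι₁ × ι₂) ℂ}
    (hσ : σ.PosSemidef) (hσ₀ : 0 ≤ lam2 σ) (a a' : ι₁ → ℂ) (b b' : ι₂ → ℂ) :
    ‖star (prodVec a b) ⬝ᵥ σ *ᵥ prodVec a' b'‖
      ≤ lam2 σ * (√(∑ i, ‖a i‖ ^ 2) * √(∑ j, ‖b j‖ ^ 2))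
          * (√(∑ i, ‖a' i‖ ^ 2) * √(∑ j, ‖b' j‖ ^ 2)) := by
  refine le_of_pow_le_pow_left₀ two_ne_zero (by positivity) ?_
  calc ‖star (prodVec a b) ⬝ᵥ σ *ᵥ prodVec a' b'‖ ^ 2 ≤ overlap σ a b * overlap σ a' b' :=
        hσ.norm_dotProduct_mulVec_sq_le _ _
    _ ≤ (lam2 σ * ((∑ i, ‖a i‖ ^ 2) * ∑ j, ‖b j‖ ^ 2))
          * (lam2 σ * ((∑ i, ‖a' i‖ ^ 2) * ∑ j, ‖b' j‖ ^ 2)) :=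
        mul_le_mul (overlap_le_lam2_mul σ a b) (overlap_le_lam2_mul σ a' b')
          (hσ.re_dotProduct_nonneg _) (by positivity)
    _ = _ := by
        simp only [mul_pow, Real.sq_sqrt (Finset.sum_nonneg fun _ _ => sq_nonneg _)]
        ring

end Overlap

section Expansion

variable {ιA ιB ιA' ιB' I J : Type*} [Fintype I] [Fintype J]

lemma prodVec_sum_prodVec (u : I → ιA → ℂ) (α : I → ιA' → ℂ) (v : J → ιB → ℂ)
    (β : J → ιB' → ℂ) :
    prodVec (∑ i, prodVec (u i) (α i)) (∑ j, prodVec (v j) (β j))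
      = ∑ k : I × J, tensorCutVec (prodVec (u k.1) (v k.2)) (prodVec (α k.1) (β k.2)) := by
  funext P
  simp only [prodVec, tensorCutVec, Finset.sum_apply, Finset.sum_mul_sum, Fintype.sum_prod_type]
  exact Finset.sum_congr rfl fun i _ => Finset.sum_congr rfl fun j _ => by ring

lemma prodVec_sum_smul (c : I → ℂ) (u : I → ιA → ℂ) (d : J → ℂ) (v : J → ιB → ℂ) :
    prodVec (∑ i, c i • u i) (∑ j, d j • v j)
      = ∑ k : I × J, (c k.1 * d k.2) • prodVec (u k.1) (v k.2) := by
  funext p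
  simp only [prodVec, Finset.sum_apply, Pi.smul_apply, smul_eq_mul, Finset.sum_mul_sum,
    Fintype.sum_prod_type]
  exact Finset.sum_congr rfl fun i _ => Finset.sum_congr rfl fun j _ => by ring

end Expansion

section TensorCut

variable {ιA ιB ιA' ιB' : Type*} [Fintype ιA] [Fintype ιB] [Fintype ιA'] [Fintype ιB']

lemma star_tensorCutVec_dotProduct_mulVec (ρ : Matrix (ιA × ιB) (ιA × ιB) ℂ)
    (σ : Matrix (ιA' × ιB') (ιA' × ιB') ℂ) (e e' : ιA × ιB → ℂ) (f f' : ιA' × ιB' → ℂ) :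
    star (tensorCutVec e f) ⬝ᵥ tensorCut ρ σ *ᵥ tensorCutVec e' f'
      = (star e ⬝ᵥ ρ *ᵥ e') * (star f ⬝ᵥ σ *ᵥ f') := by
  let φ := (Equiv.prodProdProdComm ιA ιA' ιB ιB').symm
  simp only [star_dotProduct_mulVec_eq_sum]
  conv_rhs => rw [Finset.sum_mul_sum, ← Fintype.sum_prod_type']
  rw [← φ.sum_comp]
  refine Finset.sum_congr rfl fun P _ => ?_
  conv_rhs => rw [Finset.sum_mul_sum, ← Fintype.sum_prod_type']
  rw [← φ.sum_comp]
  refine Finset.sum_congr rfl fun Q _ => ?_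
  simp only [φ, tensorCutVec, tensorCut, Equiv.prodProdProdComm, Equiv.coe_fn_symm_mk, of_apply,
    star_mul']
  ring

end TensorCut

lemma IsDensity.nonempty {ι₁ ι₂ : Type*} [Fintype ι₁] [Fintype ι₂]
    {ω : Matrix (ι₁ × ι₂) (ι₁ × ι₂) ℂ} (hω : IsDensity ω) : Nonempty ι₁ ∧ Nonempty ι₂ := by
  by_contra h
  rw [not_and_or, not_nonempty_iff, not_nonempty_iff] at h
  have : IsEmpty (ι₁ × ι₂) := by rcases h with h | h <;> infer_instance
  simpa [Matrix.trace] using hω.2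

lemma re_sum_sum_mul_le {K : Type*} [Fintype K] {E G : K → K → ℂ} {c : K → ℝ} {L : ℝ}
    (hE : ∀ k k', 0 ≤ (E k k').re ∧ (E k k').im = 0) (hG : ∀ k k', ‖G k k'‖ ≤ L * c k * c k') :
    (∑ k, ∑ k', E k k' * G k k').re ≤ L * (∑ k, ∑ k', star (c k : ℂ) * c k' * E k k').re := by
  simp only [Complex.re_sum, Finset.mul_sum]
  gcongr with k _ k' _
  rw [Complex.mul_re, (hE k k').2, zero_mul, sub_zero, Complex.star_def, Complex.conj_ofReal,
    ← Complex.ofReal_mul, Complex.re_ofReal_mul]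
  calc (E k k').re * (G k k').re ≤ (E k k').re * (L * c k * c k') :=
        mul_le_mul_of_nonneg_left ((Complex.re_le_norm _).trans (hG k k')) (hE k k').1
    _ = L * (c k * c k' * (E k k').re) := by ring

section Multiplicativity

variable {ιA ιB ιA' ιB' : Type*} [Fintype ιA] [Fintype ιB] [Fintype ιA'] [Fintype ιB']
  {ρ : Matrix (ιA × ιB) (ιA × ιB) ℂ} {σ : Matrix (ιA' × ιB') (ιA' × ιB') ℂ}

lemma overlap_tensorCut_prodVec (hσ : σ.PosSemidef) (a : ιA → ℂ) (a' : ιA' → ℂ) (b : ιB → ℂ)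
    (b' : ιB' → ℂ) :
    overlap (tensorCut ρ σ) (prodVec a a') (prodVec b b') = overlap ρ a b * overlap σ a' b' := by
  have hvec : prodVec (prodVec a a') (prodVec b b')
      = tensorCutVec (prodVec a b) (prodVec a' b') := by
    funext P
    simp only [prodVec, tensorCutVec]
    ring
  have him : (star (prodVec a' b') ⬝ᵥ σ *ᵥ prodVec a' b').im = 0 :=
    (Complex.nonneg_iff.mp (hσ.dotProduct_mulVec_nonneg _)).2.symm
  rw [overlap, hvec, star_tensorCutVec_dotProduct_mulVec, Complex.mul_re, him, mul_zero, sub_zero]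
  rfl

lemma lam2_mul_lam2_le_lam2_tensorCut [Nonempty ιA] [Nonempty ιB] [Nonempty ιA'] [Nonempty ιB']
    (hσ : σ.PosSemidef) : lam2 ρ * lam2 σ ≤ lam2 (tensorCut ρ σ) := by
  obtain ⟨a, ha, b, hb, hρab⟩ := exists_overlap_eq_lam2 ρ
  obtain ⟨a', ha', b', hb', hσab⟩ := exists_overlap_eq_lam2 σ
  rw [← hρab, ← hσab, ← overlap_tensorCut_prodVec hσ]
  refine overlap_le_lam2 _ ?_ ?_
  · rw [unitVecs, Set.mem_ofPred_eq, sum_norm_sq_prodVec, ha, ha', one_mul]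
  · rw [unitVecs, Set.mem_ofPred_eq, sum_norm_sq_prodVec, hb, hb', one_mul]

variable [DecidableEq ιA] [DecidableEq ιB]

lemma overlap_tensorCut_eq_re_sum {u : ιA → ιA → ℂ} {v : ιB → ιB → ℂ}
    (hu : IsOrthonormalBasis u) (hv : IsOrthonormalBasis v) (x : ιA × ιA' → ℂ) (y : ιB × ιB' → ℂ) :
    overlap (tensorCut ρ σ) x y = (∑ k : ιA × ιB, ∑ k' : ιA × ιB,
      (star (prodVec (u k.1) (v k.2)) ⬝ᵥ ρ *ᵥ prodVec (u k'.1) (v k'.2))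
        * (star (prodVec (basisCoeff u x k.1) (basisCoeff v y k.2)) ⬝ᵥ
            σ *ᵥ prodVec (basisCoeff u x k'.1) (basisCoeff v y k'.2))).re := by
  conv_lhs => rw [overlap, ← sum_prodVec_basisCoeff hu x, ← sum_prodVec_basisCoeff hv y]
  rw [prodVec_sum_prodVec, star_sum_dotProduct_mulVec_sum]
  simp only [star_tensorCutVec_dotProduct_mulVec]

lemma overlap_tensorCut_le [Nonempty ιA'] [Nonempty ιB'] (hρ : CompNonneg ρ)
    (hσ : σ.PosSemidef) (x : ιA × ιA' → ℂ) (y : ιB × ιB' → ℂ) :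
    overlap (tensorCut ρ σ) x y ≤ lam2 ρ * lam2 σ * ((∑ q, ‖x q‖ ^ 2) * ∑ q, ‖y q‖ ^ 2) := by
  obtain ⟨u, v, hu, hv, hE⟩ := hρ
  replace hu : IsOrthonormalBasis u := hu
  replace hv : IsOrthonormalBasis v := hv
  let nα : ιA → ℝ := fun i => √(∑ j, ‖basisCoeff u x i j‖ ^ 2)
  let nβ : ιB → ℝ := fun j => √(∑ l, ‖basisCoeff v y j l‖ ^ 2)
  let a := ∑ i, (nα i : ℂ) • u i
  let b := ∑ j, (nβ j : ℂ) • v j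
  have ha : ∑ p, ‖a p‖ ^ 2 = ∑ q, ‖x q‖ ^ 2 := sum_norm_sq_sum_sqrt_smul hu x
  have hb : ∑ p, ‖b p‖ ^ 2 = ∑ q, ‖y q‖ ^ 2 := sum_norm_sq_sum_sqrt_smul hv y
  have hρab : overlap ρ a b = (∑ k : ιA × ιB, ∑ k' : ιA × ιB,
      star ((nα k.1 * nβ k.2 : ℝ) : ℂ) * (nα k'.1 * nβ k'.2 : ℝ)
        * (star (prodVec (u k.1) (v k.2)) ⬝ᵥ ρ *ᵥ prodVec (u k'.1) (v k'.2))).re := by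
    rw [overlap, prodVec_sum_smul, star_sum_smul_dotProduct_mulVec_sum_smul]
    push_cast
    rfl
  calc overlap (tensorCut ρ σ) x y ≤ lam2 σ * overlap ρ a b := by
        rw [overlap_tensorCut_eq_re_sum hu hv, hρab]
        exact re_sum_sum_mul_le (fun k k' => hE k.1 k.2 k'.1 k'.2) fun k k' =>
          norm_star_prodVec_dotProduct_mulVec_le hσ (lam2_nonneg hσ) _ _ _ _
    _ ≤ lam2 σ * (lam2 ρ * ((∑ q, ‖x q‖ ^ 2) * ∑ q, ‖y q‖ ^ 2)) := by
        rw [← ha, ← hb]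
        exact mul_le_mul_of_nonneg_left (overlap_le_lam2_mul _ _ _) (lam2_nonneg hσ)
    _ = lam2 ρ * lam2 σ * ((∑ q, ‖x q‖ ^ 2) * ∑ q, ‖y q‖ ^ 2) := by ring

end Multiplicativity

theorem lam2_mult_of_compNonneg_general {ιA ιB ιA' ιB' : Type*}
    [Fintype ιA] [DecidableEq ιA] [Fintype ιB] [DecidableEq ιB]
    [Fintype ιA'] [Fintype ιB']
    (ρ : Matrix (ιA × ιB) (ιA × ιB) ℂ) (σ : Matrix (ιA' × ιB') (ιA' × ιB') ℂ)
    (hρ : IsDensity ρ) (hσ : IsDensity σ) (hρnn : CompNonneg ρ) :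
    lam2 (tensorCut ρ σ) = lam2 ρ * lam2 σ := by
  obtain ⟨_, _⟩ := hρ.nonempty
  obtain ⟨_, _⟩ := hσ.nonempty
  refine le_antisymm ?_ (lam2_mul_lam2_le_lam2_tensorCut hσ.1)
  obtain ⟨x, hx, y, hy, hxy⟩ := exists_overlap_eq_lam2 (tensorCut ρ σ)
  calc lam2 (tensorCut ρ σ) = overlap (tensorCut ρ σ) x y := hxy.symm
    _ ≤ lam2 ρ * lam2 σ * ((∑ q, ‖x q‖ ^ 2) * ∑ q, ‖y q‖ ^ 2) :=
        overlap_tensorCut_le hρnn hσ.1 x y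
    _ = lam2 ρ * lam2 σ := by
        rw [show ∑ q, ‖x q‖ ^ 2 = 1 from hx, show ∑ q, ‖y q‖ ^ 2 = 1 from hy, mul_one, mul_one]

/-- If `ρ` is component-wise non-negative and `σ` is any density operator, then
`Λ²(ρ ⊗ σ) = Λ²(ρ)·Λ²(σ)` across the cut `AA':BB'`. -/
theorem lam2_mult_of_compNonneg {ιA ιB ιA' ιB' : Type*}
    [Fintype ιA] [DecidableEq ιA] [Fintype ιB] [DecidableEq ιB]
    [Fintype ιA'] [DecidableEq ιA'] [Fintype ιB'] [DecidableEq ιB']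
    (ρ : Matrix (ιA × ιB) (ιA × ιB) ℂ) (σ : Matrix (ιA' × ιB') (ιA' × ιB') ℂ)
    (hρ : IsDensity ρ) (hσ : IsDensity σ) (hρnn : CompNonneg ρ) :
    lam2 (tensorCut ρ σ) = lam2 ρ * lam2 σ :=
  lam2_mult_of_compNonneg_general ρ σ hρ hσ hρnn
end

section
/- For the Werner-Holevo channel W_{d,0} (with Choi matrix proportional to the antisymmetric projector), cv(W_{d,0}) = d/(d−1) and cv(W_{d,0} ⊗ W_{d,0}) = 2d/(d−1); in particular cv is strictly non-multiplicative, cv(W_{d,0} ⊗ W_{d,0}) > cv(W_{d,0})², whenever d ≥ 3. -/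
/-!
If `⟨u ⊗ v|J|u ⊗ v⟩ ≤ λ ‖u‖² ‖v‖²` for all product vectors, then expanding a separable `Ω` into
rank-one products gives `Re Tr[Ω J] ≤ λ Tr Ω = λ |B|` whenever `Tr_A Ω = I`; so `cv ≤ λ |B|`, with
equality once a feasible `Ω` reaches the bound.

For `J = I − F`, `⟨u ⊗ v|J|u ⊗ v⟩ = ‖u‖² ‖v‖² − |⟨u, v⟩|²`, so `λ = 1`, reached by
`Ω = ∑ᵢ |i⟩⟨i| ⊗ |i + g⟩⟨i + g|` with `g ≠ 0`. For two copies, reading `u, v` as `n × n` matrices,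
the form of `(I − F) ⊗ (I − F)` is `‖u‖² ‖v‖² − ‖u* v‖² − ‖v u*‖² + |Tr u* v|²`. Both Frobenius
norms are at least `|Tr u* v|² / n`, and `|Tr u* v|² ≤ ‖u‖² ‖v‖²`, so `λ = 2 (n − 1) / n`; it is
attained at `u = v` unitary, and summing `|U⟩⟨U| ⊗ |U⟩⟨U|` over the `n²` Weyl unitaries, whose
vectorizations form an orthogonal basis, gives a feasible `Ω`.
-/

open scoped BigOperators Kronecker ComplexOrder
open Matrix

/-- The swap (flip) operator `F` on `ℂ^d ⊗ ℂ^d`. -/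
def swapMat (d : ℕ) : Matrix (Fin d × Fin d) (Fin d × Fin d) ℂ :=
  Matrix.of fun p q => if p.1 = q.2 ∧ p.2 = q.1 then 1 else 0

namespace CV

section ProductVectors

variable {ιA ιB : Type*}

def prodVec (u : ιA → ℂ) (v : ιB → ℂ) : ιA × ιB → ℂ := fun p => u p.1 * v p.2

variable [Fintype ιA] [Fintype ιB]

def prodForm (J : Matrix (ιA × ιB) (ιA × ιB) ℂ) (u : ιA → ℂ) (v : ιB → ℂ) : ℂ :=
  star (prodVec u v) ⬝ᵥ J *ᵥ prodVec u v

omit [Fintype ιA] [Fintype ιB] in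
lemma vecMulVec_kronecker_vecMulVec (u : ιA → ℂ) (v : ιB → ℂ) :
    vecMulVec u (star u) ⊗ₖ vecMulVec v (star v) =
      vecMulVec (prodVec u v) (star (prodVec u v)) := by
  ext p q
  simp only [kroneckerMap_apply, vecMulVec_apply, prodVec, Pi.star_apply, star_mul']
  ring

lemma star_dotProduct_self {ι : Type*} [Fintype ι] (w : ι → ℂ) :
    star w ⬝ᵥ w = ((∑ p, ‖w p‖ ^ 2 : ℝ) : ℂ) := by
  simp [dotProduct, Complex.conj_mul']

lemma trace_vecMulVec_star {ι : Type*} [Fintype ι] (w : ι → ℂ) :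
    (vecMulVec w (star w)).trace = ((∑ p, ‖w p‖ ^ 2 : ℝ) : ℂ) := by
  rw [trace_vecMulVec, dotProduct_comm, star_dotProduct_self]

lemma sum_norm_sq_prodVec (u : ιA → ℂ) (v : ιB → ℂ) :
    ∑ p, ‖prodVec u v p‖ ^ 2 = (∑ i, ‖u i‖ ^ 2) * ∑ j, ‖v j‖ ^ 2 := by
  simp [prodVec, Fintype.sum_prod_type, mul_pow, Finset.sum_mul_sum]

lemma trace_vecMulVec_kronecker_vecMulVec_mul (u : ιA → ℂ) (v : ιB → ℂ)
    (J : Matrix (ιA × ιB) (ιA × ιB) ℂ) :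
    ((vecMulVec u (star u) ⊗ₖ vecMulVec v (star v)) * J).trace = prodForm J u v := by
  rw [vecMulVec_kronecker_vecMulVec, vecMulVec_mul, trace_vecMulVec, dotProduct_comm,
    ← dotProduct_mulVec, prodForm]

omit [Fintype ιB] in
lemma ptraceA_kronecker (a : Matrix ιA ιA ℂ) (b : Matrix ιB ιB ℂ) :
    ptraceA (a ⊗ₖ b) = a.trace • b := by
  ext k l
  simp [ptraceA, trace, Finset.sum_mul]

omit [Fintype ιB] in
lemma ptraceA_sum {κ : Type*} [Fintype κ] (Ω : κ → Matrix (ιA × ιB) (ιA × ιB) ℂ) :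
    ptraceA (∑ k, Ω k) = ∑ k, ptraceA (Ω k) := by
  ext k l
  simp only [ptraceA, of_apply, Matrix.sum_apply]
  exact Finset.sum_comm

lemma isSep_sum_kronecker {κ : Type*} [Fintype κ] {a : κ → Matrix ιA ιA ℂ}
    {b : κ → Matrix ιB ιB ℂ} (ha : ∀ k, (a k).PosSemidef) (hb : ∀ k, (b k).PosSemidef) :
    IsSep (∑ k, a k ⊗ₖ b k) := by
  let e := Fintype.equivFin κ
  refine ⟨Fintype.card κ, a ∘ e.symm, b ∘ e.symm, fun i => ha _, fun i => hb _, ?_⟩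
  exact (e.symm.sum_comp fun k => a k ⊗ₖ b k).symm

end ProductVectors

section SeparableBound

variable {ιA ιB : Type*} [Fintype ιA] [Fintype ιB]

/-- The homogeneous form of `lam2 J ≤ lam`. -/
def ProductOverlapLE (J : Matrix (ιA × ιB) (ιA × ιB) ℂ) (lam : ℝ) : Prop :=
  ∀ (u : ιA → ℂ) (v : ιB → ℂ),
    (prodForm J u v).re ≤ lam * ((∑ i, ‖u i‖ ^ 2) * ∑ j, ‖v j‖ ^ 2)

namespace ProductOverlapLE

variable {J : Matrix (ιA × ιB) (ιA × ιB) ℂ} {lam : ℝ}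

lemma smul (h : ProductOverlapLE J lam) {c : ℝ} (hc : 0 ≤ c) :
    ProductOverlapLE ((c : ℂ) • J) (c * lam) := fun u v => by
  rw [prodForm, smul_mulVec, dotProduct_smul, smul_eq_mul, Complex.re_ofReal_mul, mul_assoc]
  exact mul_le_mul_of_nonneg_left (h u v) hc

lemma re_trace_kronecker_mul_le (h : ProductOverlapLE J lam) {a : Matrix ιA ιA ℂ}
    {b : Matrix ιB ιB ℂ} (ha : a.PosSemidef) (hb : b.PosSemidef) :
    ((a ⊗ₖ b) * J).trace.re ≤ lam * (a ⊗ₖ b).trace.re := by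
  obtain ⟨m, u, rfl⟩ := posSemidef_iff_eq_sum_vecMulVec.mp ha
  obtain ⟨k, v, rfl⟩ := posSemidef_iff_eq_sum_vecMulVec.mp hb
  have hsum : (∑ i, vecMulVec (u i) (star (u i))) ⊗ₖ ∑ j, vecMulVec (v j) (star (v j)) =
      ∑ i, ∑ j, vecMulVec (u i) (star (u i)) ⊗ₖ vecMulVec (v j) (star (v j)) := by
    ext p q
    simp only [kroneckerMap_apply, Matrix.sum_apply, Finset.sum_mul, Finset.mul_sum]
    exact Finset.sum_comm
  simp only [hsum, Matrix.sum_mul, Matrix.trace_sum, Complex.re_sum,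
    trace_vecMulVec_kronecker_vecMulVec_mul, trace_kronecker, trace_vecMulVec_star,
    ← Complex.ofReal_mul, Complex.ofReal_re]
  calc _ ≤ ∑ i, ∑ j, lam * ((∑ p, ‖u i p‖ ^ 2) * ∑ q, ‖v j q‖ ^ 2) :=
        Finset.sum_le_sum fun i _ => Finset.sum_le_sum fun j _ => h _ _
    _ = _ := by simp only [Finset.mul_sum]

lemma re_trace_mul_le (h : ProductOverlapLE J lam) {Ω : Matrix (ιA × ιB) (ιA × ιB) ℂ}
    (hΩ : IsSep Ω) : (Ω * J).trace.re ≤ lam * Ω.trace.re := by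
  obtain ⟨n, a, b, ha, hb, rfl⟩ := hΩ
  simp only [Matrix.sum_mul, Matrix.trace_sum, Complex.re_sum, Finset.mul_sum]
  exact Finset.sum_le_sum fun i _ => h.re_trace_kronecker_mul_le (ha i) (hb i)

end ProductOverlapLE

lemma trace_eq_card_of_ptraceA_eq_one [DecidableEq ιB] {Ω : Matrix (ιA × ιB) (ιA × ιB) ℂ}
    (h : ptraceA Ω = 1) : Ω.trace = Fintype.card ιB := by
  have := congrArg Matrix.trace h
  simp only [ptraceA, trace, diag_apply, of_apply, one_apply_eq] at this
  rw [trace, Fintype.sum_prod_type, Finset.sum_comm]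
  simpa using this

lemma cv_eq_of_productOverlapLE [DecidableEq ιA] [DecidableEq ιB] (N : Channel ιA ιB)
    {lam : ℝ} (h : ProductOverlapLE (choi N.map) lam) {Ω : Matrix (ιA × ιB) (ιA × ιB) ℂ}
    (hΩ : IsSep Ω) (hpt : ptraceA Ω = 1)
    (hval : (Ω * choi N.map).trace.re = lam * Fintype.card ιB) :
    cv N = lam * Fintype.card ιB := by
  refine IsGreatest.csSup_eq ⟨⟨Ω, hΩ, hpt, hval.symm⟩, ?_⟩
  rintro r ⟨Ω', hΩ', hpt', rfl⟩
  simpa [trace_eq_card_of_ptraceA_eq_one hpt'] using h.re_trace_mul_le hΩ'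

end SeparableBound

section Estimates

lemma norm_sum_sq_le_card_mul {κ E : Type*} [Fintype κ] [SeminormedAddCommGroup E] (f : κ → E) :
    ‖∑ k, f k‖ ^ 2 ≤ Fintype.card κ * ∑ k, ‖f k‖ ^ 2 := by
  calc ‖∑ k, f k‖ ^ 2 ≤ (∑ k, ‖f k‖) ^ 2 := by gcongr; exact norm_sum_le _ _
    _ ≤ _ := by simpa using sq_sum_le_card_mul_sum_sq (s := Finset.univ) (f := fun k => ‖f k‖)

lemma norm_sum_diag_sq_le {κ E : Type*} [Fintype κ] [SeminormedAddCommGroup E] (M : κ → κ → E) :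
    ‖∑ k, M k k‖ ^ 2 ≤ Fintype.card κ * ∑ k, ∑ l, ‖M k l‖ ^ 2 := by
  refine (norm_sum_sq_le_card_mul _).trans (mul_le_mul_of_nonneg_left ?_ (by positivity))
  exact Finset.sum_le_sum fun k _ =>
    Finset.single_le_sum (f := fun l => ‖M k l‖ ^ 2) (fun _ _ => by positivity) (Finset.mem_univ k)

lemma norm_star_dotProduct_sq_le {κ : Type*} [Fintype κ] (u v : κ → ℂ) :
    ‖star u ⬝ᵥ v‖ ^ 2 ≤ (∑ p, ‖u p‖ ^ 2) * ∑ p, ‖v p‖ ^ 2 := by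
  calc ‖star u ⬝ᵥ v‖ ^ 2 ≤ (∑ p, ‖u p‖ * ‖v p‖) ^ 2 := by
        gcongr
        refine (norm_sum_le _ _).trans_eq (Finset.sum_congr rfl fun p _ => ?_)
        rw [Pi.star_apply, norm_mul, norm_star]
    _ ≤ _ := Finset.sum_mul_sq_le_sq_mul_sq _ _ _

end Estimates

section OneCopy

def flipMat (ι : Type*) [DecidableEq ι] : Matrix (ι × ι) (ι × ι) ℂ :=
  Matrix.of fun p q => if p.1 = q.2 ∧ p.2 = q.1 then 1 else 0

variable {ι : Type*} [Fintype ι]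

lemma star_prodVec_dotProduct_comp_swap (u v : ι → ℂ) :
    star (prodVec u v) ⬝ᵥ prodVec u v ∘ Prod.swap = ((‖star u ⬝ᵥ v‖ ^ 2 : ℝ) : ℂ) := by
  rw [Complex.ofReal_pow, ← Complex.mul_conj']
  simp only [dotProduct, Function.comp_apply, prodVec, Prod.fst_swap, Prod.snd_swap,
    Pi.star_apply, Complex.star_def, map_sum, map_mul, Complex.conj_conj,
    Fintype.sum_prod_type, Finset.sum_mul_sum]
  exact Finset.sum_congr rfl fun a _ => Finset.sum_congr rfl fun b _ => by ring

variable [DecidableEq ι]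

lemma flipMat_mulVec (φ : ι × ι → ℂ) : flipMat ι *ᵥ φ = φ ∘ Prod.swap := by
  ext p
  simp [flipMat, mulVec, dotProduct, Fintype.sum_prod_type, ite_and, Prod.swap]

lemma prodForm_one_sub_flipMat (u v : ι → ℂ) :
    prodForm (1 - flipMat ι) u v =
      (((∑ i, ‖u i‖ ^ 2) * (∑ j, ‖v j‖ ^ 2) - ‖star u ⬝ᵥ v‖ ^ 2 : ℝ) : ℂ) := by
  rw [prodForm, sub_mulVec, one_mulVec, dotProduct_sub, flipMat_mulVec,
    star_prodVec_dotProduct_comp_swap, star_dotProduct_self, sum_norm_sq_prodVec,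
    Complex.ofReal_sub]

lemma productOverlapLE_one_sub_flipMat : ProductOverlapLE (1 - flipMat ι) 1 := fun u v => by
  rw [prodForm_one_sub_flipMat, Complex.ofReal_re, one_mul]
  exact sub_le_self _ (sq_nonneg _)

lemma sum_vecMulVec_single :
    ∑ i : ι, vecMulVec (Pi.single i (1 : ℂ)) (star (Pi.single i 1)) = 1 := by
  ext k l
  simp [vecMulVec_apply, Pi.single_apply, one_apply, Matrix.sum_apply]

lemma exists_isSep_trace_mul_one_sub_flipMat (hι : 2 ≤ Fintype.card ι) :
    ∃ Ω, IsSep Ω ∧ ptraceA Ω = 1 ∧ (Ω * (1 - flipMat ι)).trace = (Fintype.card ι : ℂ) := by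
  have : NeZero (Fintype.card ι) := ⟨by omega⟩
  -- Any shift by a nonzero element is fixed-point free; borrow the group structure of `Fin n`.
  let := (Fintype.equivFin ι).addCommGroup
  obtain ⟨g, hg⟩ := Fintype.exists_ne_of_one_lt_card hι 0
  let e : ι → ι → ℂ := fun i => Pi.single i 1
  have hnorm : ∀ i, ∑ p, ‖e i p‖ ^ 2 = 1 := fun i => by
    rw [Fintype.sum_eq_single i fun p hp => by simp [e, hp]]
    simp [e]
  have horth : ∀ i, star (e i) ⬝ᵥ e (i + g) = 0 := fun i => by simp [e, hg]
  refine ⟨∑ i, vecMulVec (e i) (star (e i)) ⊗ₖ vecMulVec (e (i + g)) (star (e (i + g))),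
    isSep_sum_kronecker (fun _ => posSemidef_vecMulVec_self_star _)
      (fun _ => posSemidef_vecMulVec_self_star _), ?_, ?_⟩
  · simp only [ptraceA_sum, ptraceA_kronecker, trace_vecMulVec_star, hnorm, Complex.ofReal_one,
      one_smul]
    exact (Equiv.sum_comp (Equiv.addRight g) fun i => vecMulVec (e i) (star (e i))).trans
      sum_vecMulVec_single
  · simp [Matrix.sum_mul, trace_sum, trace_vecMulVec_kronecker_vecMulVec_mul,
      prodForm_one_sub_flipMat, hnorm, horth]

theorem cv_eq_of_choi_eq_smul_one_sub_flipMat (N : Channel ι ι) (hι : 2 ≤ Fintype.card ι)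
    (hN : choi N.map = ((Fintype.card ι : ℂ) - 1)⁻¹ • (1 - flipMat ι)) :
    cv N = Fintype.card ι / ((Fintype.card ι : ℝ) - 1) := by
  have hn : (2 : ℝ) ≤ Fintype.card ι := by exact_mod_cast hι
  set c : ℝ := ((Fintype.card ι : ℝ) - 1)⁻¹
  have hc0 : 0 ≤ c := inv_nonneg.mpr (by linarith)
  have hc : ((Fintype.card ι : ℂ) - 1)⁻¹ = (c : ℂ) := by push_cast [c]; rfl
  rw [hc] at hN
  obtain ⟨Ω, hΩ, hpt, hval⟩ := exists_isSep_trace_mul_one_sub_flipMat hι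
  have hbound : ProductOverlapLE (choi N.map) (c * 1) :=
    hN ▸ productOverlapLE_one_sub_flipMat.smul hc0
  rw [cv_eq_of_productOverlapLE N hbound hΩ hpt ?_]
  · rw [mul_one, div_eq_inv_mul]
  · rw [hN, mul_smul_comm, trace_smul, hval, smul_eq_mul, ← Complex.ofReal_natCast,
      ← Complex.ofReal_mul, Complex.ofReal_re]
    ring

end OneCopy

section TwoCopies

def regroupKronecker {ιA ιB ιA' ιB' : Type*} (J : Matrix (ιA × ιB) (ιA × ιB) ℂ)
    (J' : Matrix (ιA' × ιB') (ιA' × ιB') ℂ) :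
    Matrix ((ιA × ιA') × ιB × ιB') ((ιA × ιA') × ιB × ιB') ℂ :=
  (J ⊗ₖ J').submatrix (Equiv.prodProdProdComm ιA ιA' ιB ιB')
    (Equiv.prodProdProdComm ιA ιA' ιB ιB')

lemma choi_eq_regroupKronecker {ιA ιB ιA' ιB' : Type*} [Fintype ιA] [DecidableEq ιA]
    [Fintype ιA'] [DecidableEq ιA']
    (T : Matrix (ιA × ιA') (ιA × ιA') ℂ →ₗ[ℂ] Matrix (ιB × ιB') (ιB × ιB') ℂ)
    (N : Matrix ιA ιA ℂ →ₗ[ℂ] Matrix ιB ιB ℂ) (N' : Matrix ιA' ιA' ℂ →ₗ[ℂ] Matrix ιB' ιB' ℂ)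
    (h : ∀ X Y, T (X ⊗ₖ Y) = N X ⊗ₖ N' Y) :
    choi T = regroupKronecker (choi N) (choi N') := by
  ext P Q
  have hsingle : Matrix.single P.1 Q.1 (1 : ℂ) =
      Matrix.single P.1.1 Q.1.1 1 ⊗ₖ Matrix.single P.1.2 Q.1.2 1 := by
    rw [single_kronecker_single, one_mul]
  simp [choi, regroupKronecker, hsingle, h]

lemma regroupKronecker_smul {ιA ιB ιA' ιB' : Type*} (c c' : ℂ) (J : Matrix (ιA × ιB) (ιA × ιB) ℂ)
    (J' : Matrix (ιA' × ιB') (ιA' × ιB') ℂ) :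
    regroupKronecker (c • J) (c' • J') = (c * c') • regroupKronecker J J' := by
  rw [regroupKronecker, smul_kronecker, kronecker_smul, smul_smul, submatrix_smul]
  rfl

lemma kronecker_mulVec_apply {α l m n p : Type*} [NonUnitalSemiring α] [Fintype m] [Fintype p]
    (A : Matrix l m α) (B : Matrix n p α) (ψ : m × p → α) (x : l) (y : n) :
    ((A ⊗ₖ B) *ᵥ ψ) (x, y) = (A *ᵥ fun x' => (B *ᵥ fun y' => ψ (x', y')) y) x := by
  simp only [mulVec, dotProduct, kroneckerMap_apply, Fintype.sum_prod_type, Finset.mul_sum,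
    mul_assoc]

variable {ι : Type*} [Fintype ι]

lemma sum_star_prodVec_mul_swap_fst (u v : ι × ι → ℂ) :
    ∑ P : (ι × ι) × ι × ι, star (prodVec u v P) * prodVec u v ((P.2.1, P.1.2), (P.1.1, P.2.2)) =
      ((∑ a', ∑ b', ‖∑ a, star (u (a, a')) * v (a, b')‖ ^ 2 : ℝ) : ℂ) := by
  simp only [Complex.ofReal_sum, Complex.ofReal_pow, ← Complex.mul_conj', map_sum, map_mul,
    Complex.conj_conj, Finset.sum_mul_sum, Fintype.sum_prod_type, prodVec, Complex.star_def]
  rw [Finset.sum_comm]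
  refine Finset.sum_congr rfl fun a' _ => ?_
  refine (Finset.sum_congr rfl fun a _ => Finset.sum_comm).trans (Finset.sum_comm.trans ?_)
  exact Finset.sum_congr rfl fun b' _ => Finset.sum_congr rfl fun a _ =>
    Finset.sum_congr rfl fun b _ => by ring

lemma sum_star_prodVec_mul_swap_snd (u v : ι × ι → ℂ) :
    ∑ P : (ι × ι) × ι × ι, star (prodVec u v P) * prodVec u v ((P.1.1, P.2.2), (P.2.1, P.1.2)) =
      ((∑ a, ∑ b, ‖∑ a', star (u (a, a')) * v (b, a')‖ ^ 2 : ℝ) : ℂ) := by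
  simp only [Complex.ofReal_sum, Complex.ofReal_pow, ← Complex.mul_conj', map_sum, map_mul,
    Complex.conj_conj, Finset.sum_mul_sum, Fintype.sum_prod_type, prodVec, Complex.star_def]
  refine Finset.sum_congr rfl fun a _ => ?_
  rw [Finset.sum_comm]
  exact Finset.sum_congr rfl fun b _ => Finset.sum_congr rfl fun a' _ =>
    Finset.sum_congr rfl fun b' _ => by ring

variable [DecidableEq ι]

lemma regroupKronecker_one_sub_flipMat_mulVec (φ : (ι × ι) × ι × ι → ℂ)
    (P : (ι × ι) × ι × ι) :
    (regroupKronecker (1 - flipMat ι) (1 - flipMat ι) *ᵥ φ) P =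
      φ P - φ ((P.2.1, P.1.2), (P.1.1, P.2.2)) - φ ((P.1.1, P.2.2), (P.2.1, P.1.2)) +
        φ P.swap := by
  rw [regroupKronecker, submatrix_mulVec_equiv, Function.comp_apply]
  simp only [Equiv.prodProdProdComm_apply, kronecker_mulVec_apply, sub_mulVec, one_mulVec,
    flipMat_mulVec, Pi.sub_apply, Function.comp_apply, Equiv.prodProdProdComm_symm, Prod.swap]
  ring

/-- Reading `u, v` as matrices `U, V` (`U a a' = u (a, a')`), the correction terms are `‖Uᴴ V‖²`,
`‖V Uᴴ‖²` and `|Tr Uᴴ V|²`. -/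
lemma re_prodForm_regroupKronecker_one_sub_flipMat (u v : ι × ι → ℂ) :
    (prodForm (regroupKronecker (1 - flipMat ι) (1 - flipMat ι)) u v).re =
      (∑ p, ‖u p‖ ^ 2) * (∑ p, ‖v p‖ ^ 2) -
        ∑ a', ∑ b', ‖∑ a, star (u (a, a')) * v (a, b')‖ ^ 2 -
        ∑ a, ∑ b, ‖∑ a', star (u (a, a')) * v (b, a')‖ ^ 2 + ‖star u ⬝ᵥ v‖ ^ 2 := by
  have hself := star_dotProduct_self (prodVec u v)
  rw [sum_norm_sq_prodVec] at hself
  have hexpand : prodForm (regroupKronecker (1 - flipMat ι) (1 - flipMat ι)) u v =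
      star (prodVec u v) ⬝ᵥ prodVec u v -
        ∑ P, star (prodVec u v P) * prodVec u v ((P.2.1, P.1.2), (P.1.1, P.2.2)) -
        ∑ P, star (prodVec u v P) * prodVec u v ((P.1.1, P.2.2), (P.2.1, P.1.2)) +
        star (prodVec u v) ⬝ᵥ prodVec u v ∘ Prod.swap := by
    simp only [prodForm, dotProduct, regroupKronecker_one_sub_flipMat_mulVec, Pi.star_apply,
      Function.comp_apply, ← Finset.sum_sub_distrib, ← Finset.sum_add_distrib, mul_add, mul_sub]
  rw [hexpand, star_prodVec_dotProduct_comp_swap, hself, sum_star_prodVec_mul_swap_fst,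
    sum_star_prodVec_mul_swap_snd]
  norm_cast

lemma productOverlapLE_regroupKronecker_one_sub_flipMat (hι : 2 ≤ Fintype.card ι) :
    ProductOverlapLE (regroupKronecker (1 - flipMat ι) (1 - flipMat ι))
      (2 * (Fintype.card ι - 1) / Fintype.card ι) := fun u v => by
  have hn : (2 : ℝ) ≤ Fintype.card ι := by exact_mod_cast hι
  set n : ℝ := (Fintype.card ι : ℝ)
  have hz_fst : star u ⬝ᵥ v = ∑ a', ∑ a, star (u (a, a')) * v (a, a') := by
    rw [dotProduct, Fintype.sum_prod_type, Finset.sum_comm]; rfl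
  have hz_snd : star u ⬝ᵥ v = ∑ a, ∑ a', star (u (a, a')) * v (a, a') := by
    rw [dotProduct, Fintype.sum_prod_type]; rfl
  have hX := norm_sum_diag_sq_le fun a' b' => ∑ a, star (u (a, a')) * v (a, b')
  have hY := norm_sum_diag_sq_le fun a b => ∑ a', star (u (a, a')) * v (b, a')
  have hS := norm_star_dotProduct_sq_le u v
  rw [← hz_fst] at hX
  rw [← hz_snd] at hY
  rw [re_prodForm_regroupKronecker_one_sub_flipMat, div_mul_eq_mul_div,
    le_div_iff₀ (by positivity)]
  nlinarith [mul_le_mul_of_nonneg_left hS (by linarith : (0 : ℝ) ≤ n - 2)]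

lemma star_vec_dotProduct_vec_of_mem_unitaryGroup {U : Matrix ι ι ℂ}
    (hU : U ∈ unitaryGroup ι ℂ) : star (vec U) ⬝ᵥ vec U = Fintype.card ι := by
  rw [star_vec_dotProduct_vec, ← star_eq_conjTranspose, mem_unitaryGroup_iff'.mp hU, trace_one]

lemma re_prodForm_regroupKronecker_vec_of_mem_unitaryGroup {U : Matrix ι ι ℂ}
    (hU : U ∈ unitaryGroup ι ℂ) :
    (prodForm (regroupKronecker (1 - flipMat ι) (1 - flipMat ι)) (vec U) (vec U)).re =
      2 * Fintype.card ι * (Fintype.card ι - 1) := by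
  have hUU : ∀ a b, ∑ a', star (U a' a) * U a' b = (1 : Matrix ι ι ℂ) a b := fun a b => by
    simpa [mul_apply] using congrFun (congrFun (mem_unitaryGroup_iff'.mp hU) a) b
  have hUU' : ∀ a b, ∑ a', star (U b a') * U a a' = (1 : Matrix ι ι ℂ) a b := fun a b => by
    simpa [mul_apply, mul_comm] using congrFun (congrFun (mem_unitaryGroup_iff.mp hU) a) b
  have htrace := star_vec_dotProduct_vec_of_mem_unitaryGroup hU
  have hnorm : ∑ p, ‖vec U p‖ ^ 2 = Fintype.card ι := by
    exact_mod_cast (star_dotProduct_self (vec U)).symm.trans htrace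
  have hone : ∑ a, ∑ b, ‖(1 : Matrix ι ι ℂ) a b‖ ^ 2 = Fintype.card ι := by
    simp [one_apply, apply_ite (fun z : ℂ => ‖z‖ ^ 2)]
  rw [re_prodForm_regroupKronecker_one_sub_flipMat, hnorm, htrace]
  simp only [vec, hUU, hUU']
  rw [Finset.sum_comm, hone, Complex.norm_natCast]
  ring

section Weyl

variable [AddCommGroup ι]

def weylMat (ψ : AddChar ι ℂ) (g : ι) : Matrix ι ι ℂ :=
  Matrix.of fun a b => if b = a + g then ψ a else 0

omit [DecidableEq ι] in
lemma mul_star_addChar_apply (ψ : AddChar ι ℂ) (a a' : ι) : ψ a * star (ψ a') = ψ (a - a') := by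
  rw [Complex.star_def, ← AddChar.map_neg_eq_conj, ← AddChar.map_add_eq_mul, sub_eq_add_neg]

lemma weylMat_mem_unitaryGroup (ψ : AddChar ι ℂ) (g : ι) : weylMat ψ g ∈ unitaryGroup ι ℂ := by
  rw [mem_unitaryGroup_iff]
  ext a c
  simp only [mul_apply, star_apply, weylMat, of_apply, apply_ite star, star_zero, ite_mul,
    mul_ite, zero_mul, mul_zero, mul_star_addChar_apply]
  simp only [Finset.sum_ite_eq', Finset.mem_univ, if_true, add_left_inj, one_apply, eq_comm]
  split_ifs with h <;> simp [h]

lemma sum_vecMulVec_vec_weylMat :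
    ∑ k : AddChar ι ℂ × ι, vecMulVec (vec (weylMat k.1 k.2)) (star (vec (weylMat k.1 k.2))) =
      (Fintype.card ι : ℂ) • 1 := by
  ext ⟨b, a⟩ ⟨b', a'⟩
  simp only [Matrix.sum_apply, vecMulVec_apply, vec, Pi.star_apply, weylMat, of_apply,
    apply_ite star, star_zero, ite_mul, mul_ite, zero_mul, mul_zero, mul_star_addChar_apply,
    Fintype.sum_prod_type]
  rw [Finset.sum_comm]
  simp only [Finset.sum_ite_irrel, AddChar.sum_apply_eq_ite, Finset.sum_const_zero, sub_eq_zero]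
  have hb : ∀ x, (b = a + x) ↔ (x = b - a) := fun x => by rw [eq_sub_iff_add_eq', eq_comm]
  simp only [hb]
  rw [Fintype.sum_eq_single (b - a) fun x hx => by simp [hx]]
  by_cases ha : a = a'
  · subst ha
    simp [one_apply, eq_comm]
  · simp [one_apply, ha]

end Weyl

lemma exists_isSep_re_trace_mul_regroupKronecker [Nonempty ι] :
    ∃ Ω, IsSep Ω ∧ ptraceA Ω = 1 ∧
      (Ω * regroupKronecker (1 - flipMat ι) (1 - flipMat ι)).trace.re =
        2 * (Fintype.card ι : ℝ) * (Fintype.card ι - 1) := by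
  have : NeZero (Fintype.card ι) := ⟨Fintype.card_ne_zero⟩
  -- The Weyl basis needs an abelian group structure on `ι`; borrow that of `Fin n`.
  let := (Fintype.equivFin ι).addCommGroup
  have hn : (Fintype.card ι : ℝ) ≠ 0 := by positivity
  set n : ℝ := (Fintype.card ι : ℝ)
  let W : AddChar ι ℂ × ι → Matrix ι ι ℂ := fun k => weylMat k.1 k.2
  have hW : ∀ k, W k ∈ unitaryGroup ι ℂ := fun k => weylMat_mem_unitaryGroup k.1 k.2
  let c : ℝ := (n ^ 2)⁻¹
  refine ⟨∑ k, vecMulVec (vec (W k)) (star (vec (W k))) ⊗ₖ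
      ((c : ℂ) • vecMulVec (vec (W k)) (star (vec (W k)))),
    isSep_sum_kronecker (fun _ => posSemidef_vecMulVec_self_star _)
      (fun _ => (posSemidef_vecMulVec_self_star _).smul (Complex.zero_le_real.mpr (by positivity))),
    ?_, ?_⟩
  · simp only [ptraceA_sum, ptraceA_kronecker, trace_vecMulVec, dotProduct_comm (vec _),
      star_vec_dotProduct_vec_of_mem_unitaryGroup (hW _), smul_smul, ← Finset.smul_sum]
    rw [sum_vecMulVec_vec_weylMat, smul_smul]
    have hcn : (Fintype.card ι : ℂ) * c * Fintype.card ι = 1 := by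
      simp only [c, n]
      push_cast
      field_simp
    rw [hcn, one_smul]
  · simp only [kronecker_smul, Matrix.sum_mul, smul_mul, trace_sum, trace_smul,
      trace_vecMulVec_kronecker_vecMulVec_mul, Complex.re_sum, smul_eq_mul,
      Complex.re_ofReal_mul, re_prodForm_regroupKronecker_vec_of_mem_unitaryGroup (hW _)]
    simp only [Finset.sum_const, Finset.card_univ, Fintype.card_prod, AddChar.card_eq,
      nsmul_eq_mul, c, n]
    push_cast
    field_simp

theorem cv_eq_of_choi_eq_regroupKronecker_smul_one_sub_flipMat (T : Channel (ι × ι) (ι × ι))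
    (hι : 2 ≤ Fintype.card ι)
    (hT : choi T.map = regroupKronecker (((Fintype.card ι : ℂ) - 1)⁻¹ • (1 - flipMat ι))
      (((Fintype.card ι : ℂ) - 1)⁻¹ • (1 - flipMat ι))) :
    cv T = 2 * Fintype.card ι / ((Fintype.card ι : ℝ) - 1) := by
  have : Nonempty ι := Fintype.card_pos_iff.mp (by omega)
  have hn : (2 : ℝ) ≤ Fintype.card ι := by exact_mod_cast hι
  set c : ℝ := ((Fintype.card ι : ℝ) - 1)⁻¹
  have hc : ((Fintype.card ι : ℂ) - 1)⁻¹ * ((Fintype.card ι : ℂ) - 1)⁻¹ = ((c ^ 2 : ℝ) : ℂ) := by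
    push_cast [c]; ring
  rw [regroupKronecker_smul, hc] at hT
  obtain ⟨Ω, hΩ, hpt, hval⟩ := exists_isSep_re_trace_mul_regroupKronecker (ι := ι)
  have hbound : ProductOverlapLE (choi T.map)
      (c ^ 2 * (2 * (Fintype.card ι - 1) / Fintype.card ι)) :=
    hT ▸ (productOverlapLE_regroupKronecker_one_sub_flipMat hι).smul (sq_nonneg c)
  rw [cv_eq_of_productOverlapLE T hbound hΩ hpt ?_]
  · simp only [c, Fintype.card_prod, Nat.cast_mul]
    field_simp
  · rw [hT, mul_smul_comm, trace_smul, smul_eq_mul, Complex.re_ofReal_mul, hval,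
      Fintype.card_prod, Nat.cast_mul]
    field_simp

end TwoCopies

end CV

/-- For the Werner-Holevo channel `W_{d,0}` (Choi matrix `(I − F)/(d−1)`),
`cv = d/(d−1)`, the two-copy value is `2d/(d−1)`, and cv is strictly
non-multiplicative whenever `d ≥ 3`. -/
theorem cv_werner_holevo_nonmultiplicative (d : ℕ) (hd : 2 ≤ d)
    (N : Channel (Fin d) (Fin d))
    (hN : choi N.map = (((d : ℂ) - 1)⁻¹) • ((1 : Matrix (Fin d × Fin d) (Fin d × Fin d) ℂ) - swapMat d))
    (T : Channel (Fin d × Fin d) (Fin d × Fin d))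
    (hT : ∀ (X Y : Matrix (Fin d) (Fin d) ℂ),
      T.map (X ⊗ₖ Y) = N.map X ⊗ₖ N.map Y) :
    cv N = d / ((d : ℝ) - 1) ∧ cv T = 2 * d / ((d : ℝ) - 1) ∧
      (3 ≤ d → cv N ^ 2 < cv T) := by
  have hN' : choi N.map = ((Fintype.card (Fin d) : ℂ) - 1)⁻¹ • (1 - CV.flipMat (Fin d)) := by
    rw [hN, Fintype.card_fin]
    rfl
  have hcard : 2 ≤ Fintype.card (Fin d) := by rwa [Fintype.card_fin]
  have hcvN := CV.cv_eq_of_choi_eq_smul_one_sub_flipMat N hcard hN'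
  have hcvT := CV.cv_eq_of_choi_eq_regroupKronecker_smul_one_sub_flipMat T hcard
    (by rw [CV.choi_eq_regroupKronecker T.map N.map N.map hT, hN'])
  rw [Fintype.card_fin] at hcvN hcvT
  refine ⟨hcvN, hcvT, fun h3 => ?_⟩
  have hd3 : (3 : ℝ) ≤ d := by exact_mod_cast h3
  rw [hcvN, hcvT, div_pow, div_lt_div_iff₀ (pow_pos (by linarith) 2) (by linarith)]
  nlinarith
end
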